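/- arXiv:2505.16443 — 6 statements merged into one kernel-verified Lean document; each statement's English description precedes it below -/
import Mathlib

section
/- Let X be a real Banach space, T > 0, J = [0,T], and let W and P be bounded linear operators on X, g : J → X continuous and v ∈ X. Suppose u : J → X is differentiable with u'(t) = −u(t) + W u(t) + g(t) and u(0) = v, and u_n : J → X is differentiable with u_n'(t) = P(−u_n(t) + W u_n(t) + g(t)), u_n(0) = P v, and P u_n(t) = u_n(t) for all t ∈ J. Then sup_{t∈J} ‖u(t) − u_n(t)‖_X ≤ e^{T‖P∘W‖} · sup_{t∈J} ‖u(t) − P u(t)‖_X, where ‖P∘W‖ is the operator norm of the composition P∘W. -/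
/-!
Put `w = P u - uₙ` and `M = sup ‖u - P u‖`. Since `P uₙ = uₙ`, `w` solves
`w' = -w + (P ∘ W)((u - P u) + w)` with `w 0 = 0`. The weight `eᵗ` removes the damping term,
and comparing `eᵗ ‖w‖` with the supersolution `M (e^{(K+1)t} - eᵗ)`, `K = ‖P ∘ W‖`, gives
`‖w t‖ ≤ M (e^{Kt} - 1)`. Then `‖u - uₙ‖ ≤ ‖u - P u‖ + ‖w‖ ≤ M e^{Kt}`.
-/

open Set

theorem norm_le_of_norm_deriv_le_of_supersolution {E : Type*} [NormedAddCommGroup E]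
    [NormedSpace ℝ E] {f f' : ℝ → E} {B B' ψ : ℝ → ℝ} {K a b : ℝ}
    (hf : ContinuousOn f (Icc a b)) (hf' : ∀ x ∈ Ico a b, HasDerivWithinAt f (f' x) (Ici x) x)
    (ha : ‖f a‖ ≤ B a) (hB : ∀ x, HasDerivAt B (B' x) x)
    (bound : ∀ x ∈ Ico a b, ‖f' x‖ ≤ K * ‖f x‖ + ψ x)
    (hsuper : ∀ x ∈ Ico a b, K * B x + ψ x ≤ B' x) :
    ∀ x ∈ Icc a b, ‖f x‖ ≤ B x := by
  set e : ℝ → ℝ := fun y => Real.exp ((K + 1) * (y - a))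
  have he : ∀ y, HasDerivAt e (e y * (K + 1)) y := fun y => by
    simpa using (((hasDerivAt_id y).sub_const a).const_mul (K + 1)).exp
  -- `B + ε e` is a strict supersolution, to which the fencing theorem applies
  have slack : ∀ ε > 0, ∀ x ∈ Icc a b, ‖f x‖ ≤ B x + ε * e x := by
    intro ε hε
    refine image_norm_le_of_norm_deriv_right_lt_deriv_boundary hf hf' (by simp [e]; linarith)
      (fun y => (hB y).add ((he y).const_mul ε)) (fun y hy hfy => ?_)
    have hεe : 0 < ε * e y := mul_pos hε (Real.exp_pos _)
    calc ‖f' y‖ ≤ K * (B y + ε * e y) + ψ y := hfy ▸ bound y hy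
      _ = K * B y + ψ y + K * (ε * e y) := by ring
      _ ≤ B' y + K * (ε * e y) := by linarith [hsuper y hy]
      _ < B' y + ε * (e y * (K + 1)) := by linarith
  intro x hx
  refine le_of_forall_pos_le_add fun η hη => ?_
  have hex : 0 < e x := Real.exp_pos _
  simpa [div_mul_cancel₀ _ hex.ne'] using slack (η / e x) (div_pos hη hex) x hx

theorem norm_le_mul_exp_sub_one_of_hasDerivAt_neg_add {E : Type*} [NormedAddCommGroup E]
    [NormedSpace ℝ E] (A : E →L[ℝ] E) {w r : ℝ → E} {M T : ℝ}
    (hw : ∀ t ∈ Icc 0 T, HasDerivAt w (-w t + A (r t + w t)) t) (hw0 : w 0 = 0)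
    (hr : ∀ t ∈ Icc 0 T, ‖r t‖ ≤ M) :
    ∀ t ∈ Icc 0 T, ‖w t‖ ≤ M * (Real.exp (‖A‖ * t) - 1) := by
  intro t ht
  have hM : 0 ≤ M := (norm_nonneg _).trans (hr 0 ⟨le_rfl, ht.1.trans ht.2⟩)
  set K := ‖A‖
  -- the weight `e^s` absorbs the damping term `-w`
  have hh : ∀ s ∈ Icc 0 T,
      HasDerivAt (fun s => Real.exp s • w s) (Real.exp s • A (r s + w s)) s := by
    intro s hs
    convert (Real.hasDerivAt_exp s).smul (hw s hs) using 1
    · rfl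
    · rw [smul_add, smul_neg]
      abel
  have hB : ∀ s, HasDerivAt (fun s => M * (Real.exp ((K + 1) * s) - Real.exp s))
      (M * ((K + 1) * Real.exp ((K + 1) * s) - Real.exp s)) s := by
    intro s
    have he : HasDerivAt (fun s => Real.exp ((K + 1) * s)) ((K + 1) * Real.exp ((K + 1) * s)) s := by
      simpa [mul_comm] using ((hasDerivAt_id s).const_mul (K + 1)).exp
    exact (he.sub (Real.hasDerivAt_exp s)).const_mul M
  have bound : ∀ s ∈ Ico 0 T, ‖Real.exp s • A (r s + w s)‖ ≤
      K * ‖Real.exp s • w s‖ + K * M * Real.exp s := by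
    intro s hs
    have hrw : ‖A (r s + w s)‖ ≤ K * (M + ‖w s‖) :=
      (A.le_opNorm _).trans (mul_le_mul_of_nonneg_left
        ((norm_add_le _ _).trans (add_le_add_left (hr s (Ico_subset_Icc_self hs)) _)) (norm_nonneg A))
    rw [norm_smul, norm_smul, Real.norm_of_nonneg (Real.exp_pos s).le]
    nlinarith [Real.exp_pos s]
  have hsuper : ∀ s ∈ Ico 0 T, K * (M * (Real.exp ((K + 1) * s) - Real.exp s)) +
      K * M * Real.exp s ≤ M * ((K + 1) * Real.exp ((K + 1) * s) - Real.exp s) := by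
    intro s hs
    have : Real.exp s ≤ Real.exp ((K + 1) * s) :=
      Real.exp_le_exp.2 (by nlinarith [hs.1, norm_nonneg A])
    nlinarith
  have hweighted := norm_le_of_norm_deriv_le_of_supersolution
    (fun s hs => (hh s hs).continuousAt.continuousWithinAt)
    (fun s hs => (hh s (Ico_subset_Icc_self hs)).hasDerivWithinAt) (by simp [hw0]) hB bound hsuper t ht
  have hexp : Real.exp ((K + 1) * t) = Real.exp t * Real.exp (K * t) := by
    rw [← Real.exp_add]; ring_nf
  rw [norm_smul, Real.norm_of_nonneg (Real.exp_pos t).le, hexp] at hweighted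
  refine le_of_mul_le_mul_left ?_ (Real.exp_pos t)
  linarith

theorem hasDerivAt_projection_sub_projected_solution {X : Type*} [NormedAddCommGroup X]
    [NormedSpace ℝ X] (W P : X →L[ℝ] X) {g u un : ℝ → X} {t : ℝ}
    (hu : HasDerivAt u (-u t + W (u t) + g t) t)
    (hun : HasDerivAt un (P (-un t + W (un t) + g t)) t) (hPun : P (un t) = un t) :
    HasDerivAt (fun s => P (u s) - un s)
      (-(P (u t) - un t) + P.comp W ((u t - P (u t)) + (P (u t) - un t))) t := by
  convert (P.hasFDerivAt.comp_hasDerivAt t hu).sub hun using 1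
  · rfl
  · simp only [ContinuousLinearMap.comp_apply, map_add, map_neg, map_sub, hPun]
    abel

theorem projected_solution_error_bound_general
    {X : Type*} [NormedAddCommGroup X] [NormedSpace ℝ X]
    (T : ℝ)
    (W P : X →L[ℝ] X) (g : ℝ → X) (v : X)
    (u un : ℝ → X)
    (hu : ∀ t ∈ Icc (0 : ℝ) T, HasDerivAt u (-u t + W (u t) + g t) t)
    (hu0 : u 0 = v)
    (hun : ∀ t ∈ Icc (0 : ℝ) T, HasDerivAt un (P (-un t + W (un t) + g t)) t)
    (hun0 : un 0 = P v)
    (hPun : ∀ t ∈ Icc (0 : ℝ) T, P (un t) = un t) :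
    (⨆ t : Icc (0 : ℝ) T, ‖u t - un t‖) ≤
      Real.exp (T * ‖P.comp W‖) * ⨆ t : Icc (0 : ℝ) T, ‖u t - P (u t)‖ := by
  set M := ⨆ t : Icc (0 : ℝ) T, ‖u t - P (u t)‖
  have hM : 0 ≤ M := Real.iSup_nonneg fun _ => norm_nonneg _
  have hu_cont : ContinuousOn u (Icc 0 T) := fun t ht => (hu t ht).continuousAt.continuousWithinAt
  have hbdd : BddAbove (range fun t : Icc (0 : ℝ) T => ‖u t - P (u t)‖) := by
    rw [← image_eq_range (fun t => ‖u t - P (u t)‖)]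
    exact isCompact_Icc.bddAbove_image (hu_cont.sub (P.continuous.comp_continuousOn hu_cont)).norm
  have hr : ∀ t ∈ Icc 0 T, ‖u t - P (u t)‖ ≤ M := fun t ht => le_ciSup hbdd ⟨t, ht⟩
  have hw := norm_le_mul_exp_sub_one_of_hasDerivAt_neg_add (P.comp W)
    (fun t ht => hasDerivAt_projection_sub_projected_solution W P (hu t ht) (hun t ht) (hPun t ht))
    (by simp [hu0, hun0]) hr
  refine Real.iSup_le (fun ⟨t, ht⟩ => ?_) (by positivity)
  calc ‖u t - un t‖ ≤ ‖u t - P (u t)‖ + ‖P (u t) - un t‖ := norm_sub_le_norm_sub_add_norm_sub _ _ _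
    _ ≤ M + M * (Real.exp (‖P.comp W‖ * t) - 1) := add_le_add (hr t ht) (hw t ht)
    _ = Real.exp (‖P.comp W‖ * t) * M := by ring
    _ ≤ Real.exp (T * ‖P.comp W‖) * M := by
      rw [mul_comm T]
      gcongr
      exact ht.2

/-- Error bound for the projected linear neural field equation:
if `u' = -u + Wu + g`, `u(0) = v`, and `uₙ' = P(-uₙ + Wuₙ + g)`, `uₙ(0) = Pv`,
with `P uₙ(t) = uₙ(t)` on `J = [0,T]`, then
`sup_{t∈J} ‖u(t) − uₙ(t)‖ ≤ e^{T‖P∘W‖} · sup_{t∈J} ‖u(t) − P u(t)‖`. -/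
theorem projected_solution_error_bound
    {X : Type*} [NormedAddCommGroup X] [NormedSpace ℝ X]
    (T : ℝ) (hT : 0 < T)
    (W P : X →L[ℝ] X) (g : ℝ → X) (hg : ContinuousOn g (Icc 0 T)) (v : X)
    (u un : ℝ → X)
    (hu : ∀ t ∈ Icc (0 : ℝ) T, HasDerivAt u (-u t + W (u t) + g t) t)
    (hu0 : u 0 = v)
    (hun : ∀ t ∈ Icc (0 : ℝ) T, HasDerivAt un (P (-un t + W (un t) + g t)) t)
    (hun0 : un 0 = P v)
    (hPun : ∀ t ∈ Icc (0 : ℝ) T, P (un t) = un t) :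
    (⨆ t : Icc (0 : ℝ) T, ‖u t - un t‖) ≤
      Real.exp (T * ‖P.comp W‖) * ⨆ t : Icc (0 : ℝ) T, ‖u t - P (u t)‖ :=
  projected_solution_error_bound_general T W P g v u un hu hu0 hun hun0 hPun
end

section
/- Let X be a real Banach space, T > 0, J = [0,T], W and P bounded linear operators on X, g : J → X continuous and v ∈ X. Suppose u : J → X is differentiable with u'(t) = −u(t) + W u(t) + g(t) and u(0) = v. Then sup_{t∈J} ‖u(t) − P u(t)‖_X ≤ ‖v − P v‖_X + T · ‖W − P∘W‖ · sup_{t∈J} ‖u(t)‖_X + T · sup_{t∈J} ‖g(t) − P g(t)‖_X, where ‖W − P∘W‖ is the operator norm. -/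
/-!
The projection error `e = u - P u` solves `e' = -e + h` with forcing
`h = (W - P ∘ W) u + (g - P g)`, bounded on `J` by
`M = ‖W - P ∘ W‖ sup ‖u‖ + sup ‖g - P g‖`. The integrating factor turns this into
`(exp t • e t)' = exp t • h t`, so comparison with the scalar solution `‖e 0‖ + (exp t - 1) M`
gives `‖e t‖ ≤ exp (-t) ‖e 0‖ + (1 - exp (-t)) M`, which is at most `‖e 0‖ + T M`.
-/

open Set Real

section LinearRelaxation

variable {E : Type*} [NormedAddCommGroup E] [NormedSpace ℝ E] {f h : ℝ → E} {a b M : ℝ}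

theorem norm_le_exp_mul_add_of_hasDerivWithinAt_neg_add (hf : ContinuousOn f (Icc a b))
    (hf' : ∀ t ∈ Ico a b, HasDerivWithinAt f (-f t + h t) (Ici t) t)
    (hh : ∀ t ∈ Ico a b, ‖h t‖ ≤ M) :
    ∀ t ∈ Icc a b, ‖f t‖ ≤ exp (-(t - a)) * ‖f a‖ + (1 - exp (-(t - a))) * M := by
  have hexp : ∀ t, HasDerivAt (fun s => exp (s - a)) (exp (t - a)) t := fun t => by
    simpa using ((hasDerivAt_id t).sub_const a).exp
  have hφ : ∀ t ∈ Ico a b,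
      HasDerivWithinAt (fun s => exp (s - a) • f s) (exp (t - a) • h t) (Ici t) t := by
    intro t ht
    refine ((hexp t).hasDerivWithinAt.smul (hf' t ht)).congr_deriv ?_
    rw [smul_add, smul_neg]
    abel
  have hφ_le :
      ∀ t ∈ Icc a b, ‖exp (t - a) • f t‖ ≤ ‖f a‖ + (exp (t - a) - 1) * M :=
    image_norm_le_of_norm_deriv_right_le_deriv_boundary
      ((continuous_exp.comp (continuous_sub_right a)).continuousOn.smul hf) hφ (by simp)
      (fun t => ((hexp t).sub_const 1).mul_const M |>.const_add _)
      (fun t ht => by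
        rw [norm_smul, norm_of_nonneg (exp_pos _).le]
        exact mul_le_mul_of_nonneg_left (hh t ht) (exp_pos _).le)
  intro t ht
  have key := mul_le_mul_of_nonneg_left (hφ_le t ht) (exp_pos (-(t - a))).le
  have hinv : exp (-(t - a)) * exp (t - a) = 1 := by rw [← exp_add]; simp
  rw [norm_smul, norm_of_nonneg (exp_pos _).le, ← mul_assoc, hinv, one_mul] at key
  linear_combination key + M * hinv

theorem norm_le_add_mul_of_hasDerivWithinAt_neg_add (hf : ContinuousOn f (Icc a b))
    (hf' : ∀ t ∈ Ico a b, HasDerivWithinAt f (-f t + h t) (Ici t) t)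
    (hh : ∀ t ∈ Ico a b, ‖h t‖ ≤ M) (hM : 0 ≤ M) :
    ∀ t ∈ Icc a b, ‖f t‖ ≤ ‖f a‖ + (t - a) * M := by
  intro t ht
  have hexp_le_one : exp (-(t - a)) ≤ 1 := exp_le_one_iff.2 (by linarith [ht.1])
  have hone_sub_le : 1 - exp (-(t - a)) ≤ t - a := by linarith [add_one_le_exp (-(t - a))]
  calc ‖f t‖ ≤ exp (-(t - a)) * ‖f a‖ + (1 - exp (-(t - a))) * M :=
        norm_le_exp_mul_add_of_hasDerivWithinAt_neg_add hf hf' hh t ht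
    _ ≤ ‖f a‖ + (t - a) * M := by
        gcongr
        exact mul_le_of_le_one_left (norm_nonneg _) hexp_le_one

end LinearRelaxation

theorem hasDerivAt_sub_apply_of_hasDerivAt_neg_add {X : Type*} [NormedAddCommGroup X]
    [NormedSpace ℝ X] {W P : X →L[ℝ] X} {u : ℝ → X} {x : X} {t : ℝ}
    (hu : HasDerivAt u (-u t + W (u t) + x) t) :
    HasDerivAt (fun s => u s - P (u s))
      (-(u t - P (u t)) + ((W - P.comp W) (u t) + (x - P x))) t := by
  refine (hu.sub (P.hasFDerivAt.comp_hasDerivAt t hu)).congr_deriv ?_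
  simp only [map_add, map_neg, sub_apply, ContinuousLinearMap.comp_apply]
  abel

theorem bddAbove_range_norm_of_continuousOn {E : Type*} [SeminormedAddCommGroup E]
    {f : ℝ → E} {a b : ℝ} (hf : ContinuousOn f (Icc a b)) :
    BddAbove (range fun t : Icc a b => ‖f t‖) := by
  simpa only [image_eq_range] using isCompact_Icc.bddAbove_image hf.norm

/-- Projection error bound for the linear neural field equation: if
`u' = -u + Wu + g`, `u(0) = v` on `J = [0,T]`, then
`sup_{t∈J} ‖u(t) − P u(t)‖ ≤ ‖v − Pv‖ + T‖W − P∘W‖ sup_{t∈J}‖u(t)‖ + T sup_{t∈J}‖g(t) − Pg(t)‖`. -/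
theorem projection_error_bound
    {X : Type*} [NormedAddCommGroup X] [NormedSpace ℝ X]
    (T : ℝ) (hT : 0 < T)
    (W P : X →L[ℝ] X) (g : ℝ → X) (hg : ContinuousOn g (Icc 0 T)) (v : X)
    (u : ℝ → X)
    (hu : ∀ t ∈ Icc (0 : ℝ) T, HasDerivAt u (-u t + W (u t) + g t) t)
    (hu0 : u 0 = v) :
    (⨆ t : Icc (0 : ℝ) T, ‖u t - P (u t)‖) ≤
      ‖v - P v‖ + T * ‖W - P.comp W‖ * (⨆ t : Icc (0 : ℝ) T, ‖u t‖)
        + T * ⨆ t : Icc (0 : ℝ) T, ‖g t - P (g t)‖ := by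
  have : Nonempty (Icc 0 T) := ⟨⟨0, left_mem_Icc.2 hT.le⟩⟩
  have he' := fun t ht => hasDerivAt_sub_apply_of_hasDerivAt_neg_add (P := P) (hu t ht)
  have hu_bdd := bddAbove_range_norm_of_continuousOn
    fun t ht => (hu t ht).continuousAt.continuousWithinAt
  have hgP_bdd :=
    bddAbove_range_norm_of_continuousOn (hg.sub (P.continuous.comp_continuousOn hg))
  set M :=
    ‖W - P.comp W‖ * (⨆ t : Icc (0 : ℝ) T, ‖u t‖) + ⨆ t : Icc (0 : ℝ) T, ‖g t - P (g t)‖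
  have hM : 0 ≤ M := add_nonneg
    (mul_nonneg (norm_nonneg _) (Real.iSup_nonneg fun _ => norm_nonneg _))
    (Real.iSup_nonneg fun _ => norm_nonneg _)
  have h_forcing (t) (ht : t ∈ Icc 0 T) : ‖(W - P.comp W) (u t) + (g t - P (g t))‖ ≤ M :=
    (norm_add_le _ _).trans <| add_le_add
      (((W - P.comp W).le_opNorm _).trans <| by gcongr; exact le_ciSup hu_bdd ⟨t, ht⟩)
      (le_ciSup hgP_bdd ⟨t, ht⟩)
  have h_err := norm_le_add_mul_of_hasDerivWithinAt_neg_add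
    (fun t ht => (he' t ht).continuousAt.continuousWithinAt)
    (fun t ht => (he' t (Ico_subset_Icc_self ht)).hasDerivWithinAt)
    (fun t ht => h_forcing t (Ico_subset_Icc_self ht)) hM
  refine ciSup_le fun t => (h_err t t.2).trans ?_
  rw [hu0, sub_zero]
  nlinarith [t.2.2]
end

section
/- Let (R_k)_{k≥0} be a sequence of nonnegative real numbers and let ν ≥ 0, γ ≥ 0 be such that R_k ≤ ν · ∑_{l=1}^{k} γ^l R_{k−l} for every k ≥ 1. Then R_k ≤ ν (ν+1)^{k−1} γ^k R_0 for every k ≥ 1; in particular R_k ≤ ((ν+1)γ)^k R_0 for every k ≥ 0. -/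
/-! Substituting the induction hypothesis `R_j ≤ c_j γ^j R₀` into the recursion bounds each term
`γ^l R_{k-l}` by `c_{k-l} γ^k R₀`, so `R_k ≤ c_k γ^k R₀` for the solution `c` of the recursion
with equality. Its partial sums are multiplied by `ν + 1` at each step, so `c_{k+1} = ν (ν+1)^k`. -/

open Finset

theorem Finset.sum_Icc_one_sub_eq_sum_range {M : Type*} [AddCommMonoid M] (f : ℕ → M) (n : ℕ) :
    ∑ l ∈ Icc 1 n, f (n - l) = ∑ j ∈ range n, f j :=
  sum_nbij' (n - ·) (n - ·) (by intro l hl; simp at hl ⊢; omega)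
    (by intro j hj; simp at hj ⊢; omega) (by intro l hl; simp at hl; omega)
    (by intro j hj; simp at hj; omega) (fun _ _ => rfl)

section

variable {α : Type*} [CommSemiring α]

/-- The solution of `c₀ = 1`, `cₖ = ν ∑_{j<k} c_j`: the recursion with equality, after dividing
`R_k` by `γ^k R₀`. -/
def recursionBound (ν : α) : ℕ → α
  | 0 => 1
  | k + 1 => ν * (ν + 1) ^ k

theorem sum_range_succ_recursionBound (ν : α) (k : ℕ) :
    ∑ j ∈ range (k + 1), recursionBound ν j = (ν + 1) ^ k := by
  induction k with
  | zero => simp [recursionBound]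
  | succ k ih => rw [sum_range_succ, ih, recursionBound, pow_succ]; ring

variable [PartialOrder α] [IsOrderedRing α]

theorem recursionBound_le_pow {ν : α} (hν : 0 ≤ ν) (k : ℕ) :
    recursionBound ν k ≤ (ν + 1) ^ k := by
  cases k with
  | zero => simp [recursionBound]
  | succ k =>
    rw [recursionBound, pow_succ']
    exact mul_le_mul_of_nonneg_right (le_add_of_nonneg_right zero_le_one)
      (pow_nonneg (add_nonneg hν zero_le_one) k)

theorem le_recursionBound_mul {R : ℕ → α} {ν γ : α} (hν : 0 ≤ ν) (hγ : 0 ≤ γ)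
    (hrec : ∀ k : ℕ, 1 ≤ k → R k ≤ ν * ∑ l ∈ Icc 1 k, γ ^ l * R (k - l)) (k : ℕ) :
    R k ≤ recursionBound ν k * γ ^ k * R 0 := by
  induction k using Nat.strong_induction_on with
  | _ k ih =>
    rcases k with _ | k
    · simp [recursionBound]
    have hterm : ∀ l ∈ Icc 1 (k + 1), γ ^ l * R (k + 1 - l) ≤
        recursionBound ν (k + 1 - l) * (γ ^ (k + 1) * R 0) := by
      intro l hl
      obtain ⟨hl1, hlk⟩ := mem_Icc.1 hl
      calc γ ^ l * R (k + 1 - l)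
          ≤ γ ^ l * (recursionBound ν (k + 1 - l) * γ ^ (k + 1 - l) * R 0) := by
            gcongr; exact ih _ (by omega)
        _ = recursionBound ν (k + 1 - l) * (γ ^ (l + (k + 1 - l)) * R 0) := by ring
        _ = recursionBound ν (k + 1 - l) * (γ ^ (k + 1) * R 0) := by
          rw [Nat.add_sub_cancel' hlk]
    calc R (k + 1) ≤ ν * ∑ l ∈ Icc 1 (k + 1), γ ^ l * R (k + 1 - l) := hrec _ k.succ_pos
      _ ≤ ν * ∑ l ∈ Icc 1 (k + 1), recursionBound ν (k + 1 - l) * (γ ^ (k + 1) * R 0) :=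
        mul_le_mul_of_nonneg_left (sum_le_sum hterm) hν
      _ = recursionBound ν (k + 1) * γ ^ (k + 1) * R 0 := by
        rw [← sum_mul, sum_Icc_one_sub_eq_sum_range (recursionBound ν),
          sum_range_succ_recursionBound, recursionBound, mul_assoc, mul_assoc]

end

/-- Combinatorial recursion estimate: if `R_k ≤ ν ∑_{l=1}^k γ^l R_{k-l}` for all `k ≥ 1`,
with `R_k ≥ 0`, `ν ≥ 0`, `γ ≥ 0`, then `R_k ≤ ν (ν+1)^{k-1} γ^k R_0` for `k ≥ 1`, and in
particular `R_k ≤ ((ν+1)γ)^k R_0` for all `k ≥ 0`. -/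
theorem recursion_estimate
    (R : ℕ → ℝ) (hR : ∀ k, 0 ≤ R k)
    (ν γ : ℝ) (hν : 0 ≤ ν) (hγ : 0 ≤ γ)
    (hrec : ∀ k : ℕ, 1 ≤ k → R k ≤ ν * ∑ l ∈ Finset.Icc 1 k, γ ^ l * R (k - l)) :
    (∀ k : ℕ, 1 ≤ k → R k ≤ ν * (ν + 1) ^ (k - 1) * γ ^ k * R 0) ∧
      (∀ k : ℕ, R k ≤ ((ν + 1) * γ) ^ k * R 0) := by
  have hbound := le_recursionBound_mul hν hγ hrec
  refine ⟨fun k hk => ?_, fun k => ?_⟩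
  · obtain ⟨m, rfl⟩ := Nat.exists_eq_add_of_le' hk
    simpa [recursionBound] using hbound (m + 1)
  · calc R k ≤ recursionBound ν k * γ ^ k * R 0 := hbound k
      _ ≤ (ν + 1) ^ k * γ ^ k * R 0 := by
        gcongr
        · exact hR 0
        · exact recursionBound_le_pow hν k
      _ = ((ν + 1) * γ) ^ k * R 0 := by rw [mul_pow]
end

section
/- Let X be a real Banach space, Γ ⊆ ℝ an open interval, β > 0, γ > 0, and A : Γ → BL(X) an infinitely differentiable operator-valued map with ‖A(y)‖ ≤ β for all y ∈ Γ and ‖A^{(l)}(y)‖ ≤ β · l! · γ^l for all y ∈ Γ and all l ≥ 1. Let v₀ ∈ X and h : [0,T] → X continuous, and let u(t,y) = e^{tA(y)} v₀ + ∫_0^t e^{(t−s)A(y)} h(s) ds be the solution of u'(t,y) = A(y) u(t,y) + h(t), u(0,y) = v₀. Then for each t ∈ [0,T] the map y ↦ u(t,y) is infinitely differentiable, and for all y ∈ Γ, t ∈ [0,T] and all integers k ≥ 0, ‖∂_y^k u(t,y)‖_X ≤ (‖v₀‖_X + t · sup_{s∈[0,T]}‖h(s)‖_X) · e^{tβ}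 · k! · (γ e^{tβ})^k. -/
/-!
Expanding both exponentials, `u(t, y) = ∑ₘ A(y)ᵐ zₘ` with vectors `zₘ` that do not depend on `y`
and satisfy `‖zₘ‖ ≤ tᵐ/m! · (‖v₀‖ + t sup ‖h‖)`. By Leibniz's rule and induction on `m`, the bound
`‖A⁽ˡ⁾‖ ≤ β l! γˡ` (for all `l ≥ 0`) gives `‖∂ᵏ(Aᵐ)‖ ≤ βᵐ k! γᵏ (k+1)ᵐ`. Hence the `k`-th
derivatives of the terms are uniformly bounded by a summable sequence with sum
`(‖v₀‖ + t sup ‖h‖) k! γᵏ e^{tβ(k+1)}`, so the series may be differentiated termwise.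
-/

open Set MeasureTheory Nat Interval
open scoped ContDiff

section SmoothSeries

variable {F : Type*} [NormedAddCommGroup F] [NormedSpace ℝ F] {s : Set ℝ}

theorem hasDerivAt_iteratedDerivWithin {f : ℝ → F} (hs : IsOpen s) (hf : ContDiffOn ℝ ∞ f s)
    (k : ℕ) {x : ℝ} (hx : x ∈ s) :
    HasDerivAt (iteratedDerivWithin k f s) (iteratedDerivWithin (k + 1) f s x) x := by
  have hdiff : DifferentiableOn ℝ (iteratedDerivWithin k f s) s :=
    hf.differentiableOn_iteratedDerivWithin (by exact_mod_cast ENat.natCast_lt_top k)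
      hs.uniqueDiffOn
  rw [iteratedDerivWithin_succ, derivWithin_of_isOpen hs hx]
  exact ((hdiff x hx).differentiableAt (hs.mem_nhds hx)).hasDerivAt

variable [CompleteSpace F]

theorem hasDerivAt_tsum_of_norm_le {g g' : ℕ → ℝ → F} {u' : ℕ → ℝ} (hs : IsOpen s)
    (hg : ∀ n, ∀ y ∈ s, HasDerivAt (g n) (g' n y) y) (hsum : ∀ y ∈ s, Summable fun n => g n y)
    (hu' : Summable u') (hg' : ∀ n, ∀ y ∈ s, ‖g' n y‖ ≤ u' n) {x : ℝ} (hx : x ∈ s) :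
    HasDerivAt (fun y => ∑' n, g n y) (∑' n, g' n x) x :=
  hasDerivAt_of_tendstoUniformlyOn hs (tendstoUniformlyOn_tsum hu' fun n y hy => hg' n y hy)
    (.of_forall fun _ y hy => HasDerivAt.fun_sum fun n _ => hg n y hy)
    (fun y hy => (hsum y hy).hasSum) hx

variable {f : ℕ → ℝ → F} {v : ℕ → ℕ → ℝ}

theorem hasDerivAt_tsum_iteratedDerivWithin (hs : IsOpen s) (hf : ∀ n, ContDiffOn ℝ ∞ (f n) s)
    (hv : ∀ k, Summable (v k)) (hfv : ∀ k n, ∀ y ∈ s, ‖iteratedDerivWithin k (f n) s y‖ ≤ v k n)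
    (k : ℕ) {x : ℝ} (hx : x ∈ s) :
    HasDerivAt (fun y => ∑' n, iteratedDerivWithin k (f n) s y)
      (∑' n, iteratedDerivWithin (k + 1) (f n) s x) x :=
  hasDerivAt_tsum_of_norm_le hs (fun n _ hy => hasDerivAt_iteratedDerivWithin hs (hf n) k hy)
    (fun y hy => (hv k).of_norm_bounded fun n => hfv k n y hy) (hv (k + 1)) (hfv (k + 1)) hx

theorem iteratedDerivWithin_tsum_of_norm_le (hs : IsOpen s) (hf : ∀ n, ContDiffOn ℝ ∞ (f n) s)
    (hv : ∀ k, Summable (v k)) (hfv : ∀ k n, ∀ y ∈ s, ‖iteratedDerivWithin k (f n) s y‖ ≤ v k n)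
    (k : ℕ) :
    EqOn (iteratedDerivWithin k (fun y => ∑' n, f n y) s)
      (fun y => ∑' n, iteratedDerivWithin k (f n) s y) s := by
  induction k with
  | zero => intro y _; simp
  | succ k ih =>
    intro y hy
    rw [iteratedDerivWithin_succ, derivWithin_congr ih (ih hy), derivWithin_of_isOpen hs hy]
    exact (hasDerivAt_tsum_iteratedDerivWithin hs hf hv hfv k hy).deriv

theorem contDiffOn_tsum_of_norm_le (hs : IsOpen s) (hf : ∀ n, ContDiffOn ℝ ∞ (f n) s)
    (hv : ∀ k, Summable (v k)) (hfv : ∀ k n, ∀ y ∈ s, ‖iteratedDerivWithin k (f n) s y‖ ≤ v k n) :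
    ContDiffOn ℝ ∞ (fun y => ∑' n, f n y) s :=
  contDiffOn_of_differentiableOn_deriv fun k _ _ hx =>
    (hasDerivAt_tsum_iteratedDerivWithin hs hf hv hfv k hx).differentiableAt.differentiableWithinAt
      |>.congr (iteratedDerivWithin_tsum_of_norm_le hs hf hv hfv k)
        (iteratedDerivWithin_tsum_of_norm_le hs hf hv hfv k hx)

end SmoothSeries

section PowerBound

variable {R : Type*} [NormedRing R] [NormedAlgebra ℝ R] {s : Set ℝ} {B : ℝ → R} {β γ : ℝ}

theorem norm_iteratedDerivWithin_pow_le (hR : ‖(1 : R)‖ ≤ 1) (hs : UniqueDiffOn ℝ s)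
    (hB : ContDiffOn ℝ ∞ B s) (hβ : 0 ≤ β) (hγ : 0 ≤ γ)
    (hBd : ∀ l, ∀ y ∈ s, ‖iteratedDerivWithin l B s y‖ ≤ β * l ! * γ ^ l)
    (m k : ℕ) {y : ℝ} (hy : y ∈ s) :
    ‖iteratedDerivWithin k (fun z => B z ^ m) s y‖ ≤ β ^ m * k ! * γ ^ k * (k + 1) ^ m := by
  induction m generalizing k with
  | zero =>
    simp only [pow_zero, iteratedDerivWithin_const]
    split_ifs with hk
    · simpa [hk] using hR
    · simp only [norm_zero, one_mul, mul_one]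
      positivity
  | succ m ih =>
    simp_rw [pow_succ' (B _)]
    rw [← norm_iteratedFDerivWithin_eq_norm_iteratedDerivWithin]
    refine (norm_iteratedFDerivWithin_mul_le hB (hB.pow m) hs hy
      (by exact_mod_cast le_top)).trans ?_
    simp only [norm_iteratedFDerivWithin_eq_norm_iteratedDerivWithin]
    have hterm : ∀ i ∈ Finset.range (k + 1), (k.choose i : ℝ) * ‖iteratedDerivWithin i B s y‖ *
        ‖iteratedDerivWithin (k - i) (fun z => B z ^ m) s y‖ ≤
          β ^ (m + 1) * k ! * γ ^ k * (k + 1) ^ m := by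
      intro i hi
      have hik : i ≤ k := Nat.lt_succ_iff.mp (Finset.mem_range.mp hi)
      have hfact : (k.choose i : ℝ) * i ! * (k - i)! = k ! := by
        exact_mod_cast Nat.choose_mul_factorial_mul_factorial hik
      have hγk : γ ^ i * γ ^ (k - i) = γ ^ k := by rw [← pow_add, Nat.add_sub_cancel' hik]
      have hki : ((k - i : ℕ) : ℝ) + 1 ≤ k + 1 := by gcongr; exact_mod_cast Nat.sub_le k i
      calc (k.choose i : ℝ) * ‖iteratedDerivWithin i B s y‖ *
            ‖iteratedDerivWithin (k - i) (fun z => B z ^ m) s y‖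
          ≤ k.choose i * (β * i ! * γ ^ i) *
              (β ^ m * (k - i)! * γ ^ (k - i) * (((k - i : ℕ) : ℝ) + 1) ^ m) := by
            gcongr
            exacts [hBd i y hy, ih (k - i)]
        _ = β ^ (m + 1) * ((k.choose i : ℝ) * i ! * (k - i)!) * (γ ^ i * γ ^ (k - i)) *
              (((k - i : ℕ) : ℝ) + 1) ^ m := by ring
        _ ≤ β ^ (m + 1) * k ! * γ ^ k * (k + 1) ^ m := by
            rw [hfact, hγk]; gcongr
    calc _ ≤ ∑ _i ∈ Finset.range (k + 1), β ^ (m + 1) * k ! * γ ^ k * ((k : ℝ) + 1) ^ m :=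
          Finset.sum_le_sum hterm
      _ = β ^ (m + 1) * k ! * γ ^ k * (k + 1) ^ (m + 1) := by
          rw [Finset.sum_const, Finset.card_range, nsmul_eq_mul]; push_cast; ring

end PowerBound

section Duhamel

variable {X : Type*} [NormedAddCommGroup X] [NormedSpace ℝ X]

theorem ContinuousLinearMap.norm_pow_le (B : X →L[ℝ] X) (m : ℕ) : ‖B ^ m‖ ≤ ‖B‖ ^ m := by
  rcases m.eq_zero_or_pos with rfl | hm
  · rw [pow_zero, pow_zero]
    exact ContinuousLinearMap.norm_id_le
  · exact norm_pow_le' B hm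

theorem hasSum_exp_smul_apply [CompleteSpace X] (B : X →L[ℝ] X) (c : ℝ) (w : X) :
    HasSum (fun m : ℕ => (c ^ m / m !) • (B ^ m) w) (NormedSpace.exp (c • B) w) := by
  have hexp := (NormedSpace.exp_series_hasSum_exp' (𝕂 := ℝ) (c • B)).mapL
    (ContinuousLinearMap.apply ℝ X w)
  simpa only [smul_pow, smul_smul, ContinuousLinearMap.apply_apply, smul_apply,
    div_eq_inv_mul] using hexp

/-- Expanding both exponentials of the Duhamel formula `e^{tB} v₀ + ∫₀ᵗ e^{(t-s)B} h(s) ds`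
gives `∑ₘ Bᵐ (duhamelCoeff t v₀ h m)`, with coefficients independent of `B`. -/
noncomputable def duhamelCoeff (t : ℝ) (v₀ : X) (h : ℝ → X) (m : ℕ) : X :=
  (t ^ m / m !) • v₀ + ∫ s in 0..t, ((t - s) ^ m / m !) • h s

theorem norm_duhamelCoeff_le {t M : ℝ} {v₀ : X} {h : ℝ → X} (hM : ∀ s ∈ Ι 0 t, ‖h s‖ ≤ M)
    (m : ℕ) : ‖duhamelCoeff t v₀ h m‖ ≤ |t| ^ m / m ! * (‖v₀‖ + |t| * M) := by
  have hint : ‖∫ s in 0..t, ((t - s) ^ m / m !) • h s‖ ≤ |t| ^ m / m ! * M * |t - 0| := by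
    refine intervalIntegral.norm_integral_le_of_norm_le_const fun s hs => ?_
    rw [norm_smul, norm_div, norm_pow, Real.norm_eq_abs, RCLike.norm_natCast]
    have hts : |t - s| ≤ |t - 0| := abs_sub_right_of_mem_uIcc (uIoc_subset_uIcc hs)
    rw [sub_zero] at hts
    gcongr
    exact hM s hs
  calc ‖duhamelCoeff t v₀ h m‖
      ≤ ‖(t ^ m / m !) • v₀‖ + ‖∫ s in 0..t, ((t - s) ^ m / m !) • h s‖ := norm_add_le _ _
    _ ≤ |t| ^ m / m ! * ‖v₀‖ + |t| ^ m / m ! * M * |t - 0| := by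
        rw [norm_smul, norm_div, norm_pow, Real.norm_eq_abs, RCLike.norm_natCast]
        gcongr
    _ = |t| ^ m / m ! * (‖v₀‖ + |t| * M) := by rw [sub_zero]; ring

variable [CompleteSpace X]

theorem hasSum_integral_exp_smul_apply (B : X →L[ℝ] X) {t : ℝ} {h : ℝ → X}
    (hh : IntervalIntegrable h volume 0 t) :
    HasSum (fun m : ℕ => ∫ s in 0..t, ((t - s) ^ m / m !) • (B ^ m) (h s))
      (∫ s in 0..t, NormedSpace.exp ((t - s) • B) (h s)) := by
  refine intervalIntegral.hasSum_integral_of_dominated_convergence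
    (fun m s => (|t| * ‖B‖) ^ m / m ! * ‖h s‖) (fun m => ?_) (fun m => ?_)
    (.of_forall fun s _ => (Real.summable_pow_div_factorial _).mul_right _) ?_
    (.of_forall fun s _ => hasSum_exp_smul_apply B (t - s) (h s))
  · have hh' := (intervalIntegrable_iff.mp hh).aestronglyMeasurable
    exact (((continuous_const.sub continuous_id).pow m).div_const _).aestronglyMeasurable.smul
      ((B ^ m).continuous.comp_aestronglyMeasurable hh')
  · refine .of_forall fun s hs => ?_
    have hts : |t - s| ≤ |t - 0| := abs_sub_right_of_mem_uIcc (uIoc_subset_uIcc hs)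
    rw [sub_zero] at hts
    rw [norm_smul, norm_div, norm_pow, Real.norm_eq_abs, RCLike.norm_natCast, mul_pow,
      mul_div_right_comm, mul_assoc]
    gcongr
    exact ((B ^ m).le_opNorm _).trans (by gcongr; exact B.norm_pow_le m)
  · simp_rw [tsum_mul_right]
    exact hh.norm.const_mul _

theorem hasSum_pow_apply_duhamelCoeff (B : X →L[ℝ] X) {t : ℝ} {v₀ : X} {h : ℝ → X}
    (hh : IntervalIntegrable h volume 0 t) :
    HasSum (fun m : ℕ => (B ^ m) (duhamelCoeff t v₀ h m))
      (NormedSpace.exp (t • B) v₀ + ∫ s in 0..t, NormedSpace.exp ((t - s) • B) (h s)) := by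
  convert (hasSum_exp_smul_apply B t v₀).add (hasSum_integral_exp_smul_apply B hh) using 2 with m
  rw [duhamelCoeff, map_add, map_smul, ← (B ^ m).intervalIntegral_comp_comm]
  · simp only [map_smul]
  · exact hh.continuousOn_smul (by fun_prop)

end Duhamel

section PowerSeries

variable {X : Type*} [NormedAddCommGroup X] [NormedSpace ℝ X]
  {Γ : Set ℝ} {A : ℝ → X →L[ℝ] X} {β γ r C : ℝ} {z : ℕ → X}

theorem norm_iteratedDerivWithin_pow_apply_le (hΓ : IsOpen Γ) (hA : ContDiffOn ℝ ∞ A Γ)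
    (hβ : 0 ≤ β) (hγ : 0 ≤ γ)
    (hAd : ∀ l, ∀ y ∈ Γ, ‖iteratedDerivWithin l A Γ y‖ ≤ β * l ! * γ ^ l)
    (hz : ∀ m, ‖z m‖ ≤ r ^ m / m ! * C) (k m : ℕ) {y : ℝ} (hy : y ∈ Γ) :
    ‖iteratedDerivWithin k (fun x => (A x ^ m) (z m)) Γ y‖ ≤
      C * k ! * γ ^ k * ((r * β * (k + 1)) ^ m / m !) := by
  rw [← norm_iteratedFDerivWithin_eq_norm_iteratedDerivWithin]
  calc _ ≤ ‖z m‖ * ‖iteratedFDerivWithin ℝ k (fun x => A x ^ m) Γ y‖ :=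
        norm_iteratedFDerivWithin_clm_apply_const (hA.pow m y hy) hΓ.uniqueDiffOn hy
          (by exact_mod_cast le_top)
    _ ≤ r ^ m / m ! * C * (β ^ m * k ! * γ ^ k * (k + 1) ^ m) := by
        rw [norm_iteratedFDerivWithin_eq_norm_iteratedDerivWithin]
        exact mul_le_mul (hz m) (norm_iteratedDerivWithin_pow_le ContinuousLinearMap.norm_id_le
          hΓ.uniqueDiffOn hA hβ hγ hAd m k hy) (norm_nonneg _) ((norm_nonneg _).trans (hz m))
    _ = C * k ! * γ ^ k * ((r * β * (k + 1)) ^ m / m !) := by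
        rw [mul_pow, mul_pow]; ring

variable [CompleteSpace X]

theorem contDiffOn_tsum_pow_apply (hΓ : IsOpen Γ) (hA : ContDiffOn ℝ ∞ A Γ)
    (hβ : 0 ≤ β) (hγ : 0 ≤ γ)
    (hAd : ∀ l, ∀ y ∈ Γ, ‖iteratedDerivWithin l A Γ y‖ ≤ β * l ! * γ ^ l)
    (hz : ∀ m, ‖z m‖ ≤ r ^ m / m ! * C) :
    ContDiffOn ℝ ∞ (fun y => ∑' m, (A y ^ m) (z m)) Γ :=
  contDiffOn_tsum_of_norm_le hΓ (fun m => (hA.pow m).clm_apply contDiffOn_const)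
    (fun _ => (Real.summable_pow_div_factorial _).mul_left _)
    (fun k m _ hy => norm_iteratedDerivWithin_pow_apply_le hΓ hA hβ hγ hAd hz k m hy)

theorem norm_iteratedDerivWithin_tsum_pow_apply_le (hΓ : IsOpen Γ) (hA : ContDiffOn ℝ ∞ A Γ)
    (hβ : 0 ≤ β) (hγ : 0 ≤ γ)
    (hAd : ∀ l, ∀ y ∈ Γ, ‖iteratedDerivWithin l A Γ y‖ ≤ β * l ! * γ ^ l)
    (hz : ∀ m, ‖z m‖ ≤ r ^ m / m ! * C) (k : ℕ) {y : ℝ} (hy : y ∈ Γ) :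
    ‖iteratedDerivWithin k (fun y => ∑' m, (A y ^ m) (z m)) Γ y‖ ≤
      C * k ! * γ ^ k * Real.exp (r * β * (k + 1)) := by
  have hv (k : ℕ) : Summable fun m : ℕ => C * k ! * γ ^ k * ((r * β * (k + 1)) ^ m / m !) :=
    (Real.summable_pow_div_factorial _).mul_left _
  have hterm (k m : ℕ) (y : ℝ) (hy : y ∈ Γ) :=
    norm_iteratedDerivWithin_pow_apply_le hΓ hA hβ hγ hAd hz k m hy
  rw [iteratedDerivWithin_tsum_of_norm_le hΓ (fun m => (hA.pow m).clm_apply contDiffOn_const)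
    hv hterm k hy]
  calc _ ≤ ∑' m : ℕ, C * k ! * γ ^ k * ((r * β * (k + 1)) ^ m / m !) :=
        tsum_of_norm_bounded (hv k).hasSum fun m => hterm k m y hy
    _ = C * k ! * γ ^ k * Real.exp (r * β * (k + 1)) := by
        rw [tsum_mul_left, Real.exp_eq_exp_ℝ, (NormedSpace.expSeries_div_hasSum_exp _).tsum_eq]

end PowerSeries

theorem derivative_bound_random_kernel_general
    {X : Type*} [NormedAddCommGroup X] [NormedSpace ℝ X] [CompleteSpace X]
    (T β γ : ℝ) (hβ : 0 < β) (hγ : 0 < γ)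
    (Γ : Set ℝ) (hΓopen : IsOpen Γ)
    (A : ℝ → X →L[ℝ] X) (hA : ContDiffOn ℝ (⊤ : ℕ∞) A Γ)
    (hAbound : ∀ y ∈ Γ, ‖A y‖ ≤ β)
    (hAderiv : ∀ y ∈ Γ, ∀ l : ℕ, 1 ≤ l →
      ‖iteratedDerivWithin l A Γ y‖ ≤ β * (Nat.factorial l) * γ ^ l)
    (v₀ : X) (h : ℝ → X) (hh : ContinuousOn h (Icc 0 T))
    (u : ℝ → ℝ → X)
    (hu : ∀ t y, u t y = NormedSpace.exp (t • A y) v₀ +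
      ∫ s in (0 : ℝ)..t, NormedSpace.exp ((t - s) • A y) (h s)) :
    ∀ t ∈ Icc (0 : ℝ) T,
      ContDiffOn ℝ (⊤ : ℕ∞) (fun y => u t y) Γ ∧
      (∀ y ∈ Γ, ∀ k : ℕ,
        ‖iteratedDerivWithin k (fun y => u t y) Γ y‖ ≤
          (‖v₀‖ + t * ⨆ s : Icc (0 : ℝ) T, ‖h s‖) * Real.exp (t * β) *
            (Nat.factorial k) * (γ * Real.exp (t * β)) ^ k) := by
  rintro t ⟨ht0, htT⟩
  have hIcc : Icc 0 t ⊆ Icc 0 T := Icc_subset_Icc_right htT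
  have hbdd : BddAbove (range fun s : Icc (0 : ℝ) T => ‖h s‖) := by
    simpa only [image_eq_range] using isCompact_Icc.bddAbove_image hh.norm
  have hM : ∀ s ∈ Ι 0 t, ‖h s‖ ≤ ⨆ s : Icc (0 : ℝ) T, ‖h s‖ := fun s hs =>
    le_ciSup hbdd ⟨s, hIcc (by simpa [uIcc_of_le ht0] using uIoc_subset_uIcc hs)⟩
  have hz := norm_duhamelCoeff_le (v₀ := v₀) hM
  rw [abs_of_nonneg ht0] at hz
  have hAd : ∀ l, ∀ y ∈ Γ, ‖iteratedDerivWithin l A Γ y‖ ≤ β * l ! * γ ^ l := by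
    rintro (_ | l) y hy
    · simpa using hAbound y hy
    · exact hAderiv y hy (l + 1) l.succ_pos
  have hrep : ∀ y, u t y = ∑' m, (A y ^ m) (duhamelCoeff t v₀ h m) := fun y => by
    rw [hu, (hasSum_pow_apply_duhamelCoeff (A y)
      ((hh.mono (by rwa [uIcc_of_le ht0])).intervalIntegrable)).tsum_eq]
  refine ⟨(contDiffOn_tsum_pow_apply hΓopen hA hβ.le hγ.le hAd hz).congr fun y _ => hrep y,
    fun y hy k => ?_⟩
  rw [iteratedDerivWithin_congr (fun y _ => hrep y) hy]
  refine (norm_iteratedDerivWithin_tsum_pow_apply_le hΓopen hA hβ.le hγ.le hAd hz k hy).trans_eq ?_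
  rw [show t * β * (k + 1) = t * β + k * (t * β) by ring, Real.exp_add, Real.exp_nat_mul]
  ring

/-- Derivative bounds for the linear neural field with random kernel:
if `A : Γ → BL(X)` is smooth with `‖A(y)‖ ≤ β` and `‖A^{(l)}(y)‖ ≤ β l! γ^l` for `l ≥ 1`,
and `u(t,y) = e^{tA(y)} v₀ + ∫_0^t e^{(t−s)A(y)} h(s) ds`, then for each `t ∈ [0,T]` the
map `y ↦ u(t,y)` is smooth on `Γ` and
`‖∂_y^k u(t,y)‖ ≤ (‖v₀‖ + t sup_s ‖h(s)‖) e^{tβ} k! (γ e^{tβ})^k`. -/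
theorem derivative_bound_random_kernel
    {X : Type*} [NormedAddCommGroup X] [NormedSpace ℝ X] [CompleteSpace X]
    (T β γ : ℝ) (hβ : 0 < β) (hγ : 0 < γ)
    (Γ : Set ℝ) (hΓopen : IsOpen Γ) (hΓint : Γ.OrdConnected)
    (A : ℝ → X →L[ℝ] X) (hA : ContDiffOn ℝ (⊤ : ℕ∞) A Γ)
    (hAbound : ∀ y ∈ Γ, ‖A y‖ ≤ β)
    (hAderiv : ∀ y ∈ Γ, ∀ l : ℕ, 1 ≤ l →
      ‖iteratedDerivWithin l A Γ y‖ ≤ β * (Nat.factorial l) * γ ^ l)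
    (v₀ : X) (h : ℝ → X) (hh : ContinuousOn h (Icc 0 T))
    (u : ℝ → ℝ → X)
    (hu : ∀ t y, u t y = NormedSpace.exp (t • A y) v₀ +
      ∫ s in (0 : ℝ)..t, NormedSpace.exp ((t - s) • A y) (h s)) :
    ∀ t ∈ Icc (0 : ℝ) T,
      ContDiffOn ℝ (⊤ : ℕ∞) (fun y => u t y) Γ ∧
      (∀ y ∈ Γ, ∀ k : ℕ,
        ‖iteratedDerivWithin k (fun y => u t y) Γ y‖ ≤
          (‖v₀‖ + t * ⨆ s : Icc (0 : ℝ) T, ‖h s‖) * Real.exp (t * β) *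
            (Nat.factorial k) * (γ * Real.exp (t * β)) ^ k) :=
  derivative_bound_random_kernel_general T β γ hβ hγ Γ hΓopen A hA hAbound hAderiv v₀ h hh u hu
end

section
/- Let B be a complex Banach space, Γ ⊆ ℝ an interval, and f : Γ → B infinitely differentiable (as a function of the real variable) such that there exist D ≥ 0 and δ > 0 with ‖f^{(k)}(y)‖_B ≤ D · k! · δ^k for all y ∈ Γ and all integers k ≥ 0. Then for every 0 < τ < 1/δ there exists a function F : Σ(Γ,τ) → B, where Σ(Γ,τ) = {z ∈ ℂ : dist(z,Γ) < τ}, such that F is complex-differentiable (holomorphic) on the open set Σ(Γ,τ) and F(y) = f(y) for every y ∈ Γ. -/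
/-!
Around each `x₀ ∈ Γ` the Taylor series `∑ f⁽ᵏ⁾(x₀) (z - x₀)ᵏ / k!` has radius of convergence at
least `1 / δ`, and on `Γ` it sums to `f`: the Lagrange form of the remainder is bounded by
`D (n + 1) (δ |x - x₀|)ⁿ⁺¹`. Two such local extensions agree with `f` on a real interval inside
the (convex) intersection of their discs, hence on the whole intersection by the identity
theorem, so they glue to a holomorphic function on the `1 / δ`-neighbourhood of `Γ`.
-/

open Set Filter Topology Metric
open scoped Nat

section Taylor

variable {E : Type*} [NormedAddCommGroup E] [NormedSpace ℝ E] {f : ℝ → E} {s : Set ℝ}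

theorem Set.OrdConnected.uniqueDiffOn_of_ne (hs : s.OrdConnected) {a b : ℝ} (ha : a ∈ s)
    (hb : b ∈ s) (hab : a ≠ b) : UniqueDiffOn ℝ s := by
  refine uniqueDiffOn_convex hs.convex ((nonempty_Ioo.2 (min_lt_max.2 hab)).mono ?_)
  rw [← interior_Icc]
  exact interior_mono (hs.uIcc_subset ha hb)

theorem norm_sub_taylorWithinEval_le (hs : s.OrdConnected) (hs' : UniqueDiffOn ℝ s) {n : ℕ}
    (hf : ContDiffOn ℝ (n + 1) f s) {x₀ x C : ℝ} (hx₀ : x₀ ∈ s) (hx : x ∈ s)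
    (hC : ∀ t ∈ uIcc x₀ x, ‖iteratedDerivWithin (n + 1) f s t‖ ≤ C) :
    ‖f x - taylorWithinEval f n s x₀ x‖ ≤ C * |x - x₀| ^ (n + 1) / n ! := by
  have hI : uIcc x₀ x ⊆ s := hs.uIcc_subset hx₀ hx
  have hderiv : ∀ t ∈ uIcc x₀ x, HasDerivWithinAt (fun t => taylorWithinEval f n s t x)
      (((n ! : ℝ)⁻¹ * (x - t) ^ n) • iteratedDerivWithin (n + 1) f s t) (uIcc x₀ x) t :=
    fun t ht => (hasDerivWithinAt_taylorWithinEval hs' self_mem_nhdsWithin (hI ht) subset_rfl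
      hf.of_succ ((hf.differentiableOn_iteratedDerivWithin (mod_cast n.lt_succ_self) hs') t
        (hI ht))).mono hI
  have hbound : ∀ t ∈ uIcc x₀ x,
      ‖((n ! : ℝ)⁻¹ * (x - t) ^ n) • iteratedDerivWithin (n + 1) f s t‖ ≤
        (n ! : ℝ)⁻¹ * |x - x₀| ^ n * C := by
    intro t ht
    rw [norm_smul, Real.norm_eq_abs, abs_mul, abs_pow, abs_inv, Nat.abs_cast]
    gcongr (n ! : ℝ)⁻¹ * ?_ ^ n * ?_
    · exact abs_sub_right_of_mem_uIcc ht
    · exact hC t ht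
  have := convex_uIcc x₀ x |>.norm_image_sub_le_of_norm_hasDerivWithin_le hderiv hbound
    left_mem_uIcc right_mem_uIcc
  rw [taylorWithinEval_self, Real.norm_eq_abs] at this
  refine this.trans_eq ?_
  rw [pow_succ]
  field_simp

theorem hasSum_taylor_of_norm_iteratedDerivWithin_le [CompleteSpace E] (hs : s.OrdConnected)
    (hf : ContDiffOn ℝ (⊤ : ℕ∞) f s) {D δ : ℝ} (hδ : 0 ≤ δ)
    (hbound : ∀ y ∈ s, ∀ k : ℕ, ‖iteratedDerivWithin k f s y‖ ≤ D * k ! * δ ^ k)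
    {x₀ x : ℝ} (hx₀ : x₀ ∈ s) (hx : x ∈ s) (hδx : δ * |x - x₀| < 1) :
    HasSum (fun k : ℕ => ((k ! : ℝ)⁻¹ * (x - x₀) ^ k) • iteratedDerivWithin k f s x₀) (f x) := by
  rcases eq_or_ne x₀ x with rfl | hne
  · convert hasSum_single (f := fun k : ℕ => ((k ! : ℝ)⁻¹ * (x₀ - x₀) ^ k) •
      iteratedDerivWithin k f s x₀) 0 (fun k hk => by simp [zero_pow hk]) using 1
    simp
  set q := δ * |x - x₀|
  have hq : |q| < 1 := by rwa [abs_of_nonneg (by positivity)]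
  have hsummable : Summable
      (fun k : ℕ => ((k ! : ℝ)⁻¹ * (x - x₀) ^ k) • iteratedDerivWithin k f s x₀) := by
    refine .of_norm_bounded ((summable_geometric_of_abs_lt_one hq).mul_left D) fun k => ?_
    rw [norm_smul, Real.norm_eq_abs, abs_mul, abs_pow, abs_inv, Nat.abs_cast]
    calc (k ! : ℝ)⁻¹ * |x - x₀| ^ k * ‖iteratedDerivWithin k f s x₀‖
        ≤ (k ! : ℝ)⁻¹ * |x - x₀| ^ k * (D * k ! * δ ^ k) := by gcongr; exact hbound x₀ hx₀ k
      _ = D * q ^ k := by rw [mul_pow]; field_simp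
  rw [hsummable.hasSum_iff_tendsto_nat, ← tendsto_add_atTop_iff_nat 1,
    tendsto_iff_norm_sub_tendsto_zero]
  have hremainder : ∀ n : ℕ,
      ‖f x - taylorWithinEval f n s x₀ x‖ ≤ D * (((n : ℝ) + 1) * q ^ (n + 1)) := by
    intro n
    refine (norm_sub_taylorWithinEval_le hs (hs.uniqueDiffOn_of_ne hx₀ hx hne)
      (hf.of_le (mod_cast le_top)) hx₀ hx
      fun t ht => hbound t (hs.uIcc_subset hx₀ hx ht) _).trans_eq ?_
    push_cast [Nat.factorial_succ]
    field_simp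
    ring
  refine squeeze_zero (fun _ => norm_nonneg _) (fun n => ?_)
    (by simpa using ((tendsto_self_mul_const_pow_of_abs_lt_one hq).comp
      (tendsto_add_atTop_nat 1)).const_mul D)
  rw [norm_sub_rev, ← taylor_within_apply]
  exact hremainder n

end Taylor

theorem Complex.dist_ofReal_ofReal (x y : ℝ) : dist (x : ℂ) y = |x - y| := by
  rw [Complex.isometry_ofReal.dist_eq, Real.dist_eq]

theorem AnalyticOnNhd.eqOn_of_preconnected_of_eventuallyEq_ofReal {E : Type*}
    [NormedAddCommGroup E] [NormedSpace ℂ E] {f g : ℂ → E} {U : Set ℂ}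
    (hf : AnalyticOnNhd ℂ f U) (hg : AnalyticOnNhd ℂ g U) (hU : IsPreconnected U) {x : ℝ}
    (hx : (x : ℂ) ∈ U) (hfg : ∀ᶠ t : ℝ in 𝓝 x, f t = g t) : EqOn f g U := by
  have hofReal : Tendsto ((↑) : ℝ → ℂ) (𝓝[≠] x) (𝓝[≠] (x : ℂ)) :=
    Complex.continuous_ofReal.continuousWithinAt.tendsto_nhdsWithin fun t ht =>
      Complex.ofReal_injective.ne ht
  exact hf.eqOn_of_preconnected_of_frequently_eq hg hU hx
    (hofReal.frequently (hfg.filter_mono nhdsWithin_le_nhds).frequently)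

theorem exists_differentiableOn_iUnion_eqOn {𝕜 E F ι : Type*} [NontriviallyNormedField 𝕜]
    [NormedAddCommGroup E] [NormedSpace 𝕜 E] [NormedAddCommGroup F] [NormedSpace 𝕜 F]
    {U : ι → Set E} (hU : ∀ i, IsOpen (U i)) {g : ι → E → F}
    (hg : ∀ i, DifferentiableOn 𝕜 (g i) (U i)) (hcompat : ∀ i j, EqOn (g i) (g j) (U i ∩ U j)) :
    ∃ G : E → F, DifferentiableOn 𝕜 G (⋃ i, U i) ∧ ∀ i, EqOn G (g i) (U i) := by
  classical
  let G : E → F := fun z => if h : ∃ i, z ∈ U i then g h.choose z else 0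
  have hG : ∀ i, EqOn G (g i) (U i) := fun i z hz => by
    have h : ∃ i, z ∈ U i := ⟨i, hz⟩
    simp only [G, dif_pos h]
    exact hcompat _ _ ⟨h.choose_spec, hz⟩
  refine ⟨G, fun z hz => ?_, hG⟩
  obtain ⟨i, hi⟩ := mem_iUnion.1 hz
  exact (((hg i).differentiableAt ((hU i).mem_nhds hi)).congr_of_eventuallyEq
    (eventuallyEq_of_mem ((hU i).mem_nhds hi) (hG i))).differentiableWithinAt

section ComplexTaylor

variable {B : Type*} [NormedAddCommGroup B] [NormedSpace ℂ B]

noncomputable def complexTaylorSeries (f : ℝ → B) (s : Set ℝ) (x₀ : ℝ) :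
    FormalMultilinearSeries ℂ ℂ B :=
  fun k => ContinuousMultilinearMap.mkPiRing ℂ (Fin k)
    ((k ! : ℂ)⁻¹ • iteratedDerivWithin k f s x₀)

noncomputable def taylorExtension (f : ℝ → B) (s : Set ℝ) (x₀ : ℝ) (z : ℂ) : B :=
  (complexTaylorSeries f s x₀).sum (z - x₀)

variable {f : ℝ → B} {s : Set ℝ}

theorem complexTaylorSeries_apply_ofReal (x₀ t : ℝ) (k : ℕ) :
    complexTaylorSeries f s x₀ k (fun _ => (t : ℂ)) =
      ((k ! : ℝ)⁻¹ * t ^ k) • iteratedDerivWithin k f s x₀ := by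
  rw [complexTaylorSeries, ContinuousMultilinearMap.mkPiRing_apply, Finset.prod_const,
    Finset.card_fin, smul_smul, ← Complex.ofReal_pow, ← Complex.ofReal_natCast,
    ← Complex.ofReal_inv, ← Complex.ofReal_mul, Complex.coe_smul, mul_comm]

theorem ofReal_inv_le_radius_complexTaylorSeries {x₀ D δ : ℝ} (hδ : 0 < δ)
    (hbound : ∀ k : ℕ, ‖iteratedDerivWithin k f s x₀‖ ≤ D * k ! * δ ^ k) :
    ENNReal.ofReal δ⁻¹ ≤ (complexTaylorSeries f s x₀).radius := by
  refine (complexTaylorSeries f s x₀).le_radius_of_bound D fun k => ?_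
  rw [complexTaylorSeries, ContinuousMultilinearMap.norm_mkPiRing, norm_smul, norm_inv,
    Complex.norm_natCast, Real.coe_toNNReal _ (inv_nonneg.2 hδ.le)]
  calc (k ! : ℝ)⁻¹ * ‖iteratedDerivWithin k f s x₀‖ * δ⁻¹ ^ k
      ≤ (k ! : ℝ)⁻¹ * (D * k ! * δ ^ k) * δ⁻¹ ^ k := by gcongr; exact hbound k
    _ = D := by rw [inv_pow]; field_simp

variable [CompleteSpace B] {D δ : ℝ}

theorem analyticOnNhd_taylorExtension {x₀ : ℝ} (hδ : 0 < δ)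
    (hbound : ∀ k : ℕ, ‖iteratedDerivWithin k f s x₀‖ ≤ D * k ! * δ ^ k) :
    AnalyticOnNhd ℂ (taylorExtension f s x₀) (ball (x₀ : ℂ) δ⁻¹) := by
  have hrad := ofReal_inv_le_radius_complexTaylorSeries hδ hbound
  have hpos : 0 < (complexTaylorSeries f s x₀).radius :=
    (ENNReal.ofReal_pos.2 (inv_pos.2 hδ)).trans_le hrad
  have := (((complexTaylorSeries f s x₀).hasFPowerSeriesOnBall hpos).comp_sub
    (x₀ : ℂ)).analyticOnNhd
  rw [zero_add] at this
  rw [← eball_ofReal]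
  exact this.mono (eball_subset_eball hrad)

theorem taylorExtension_ofReal (hs : s.OrdConnected) (hf : ContDiffOn ℝ (⊤ : ℕ∞) f s)
    (hδ : 0 < δ) (hbound : ∀ y ∈ s, ∀ k : ℕ, ‖iteratedDerivWithin k f s y‖ ≤ D * k ! * δ ^ k)
    {x₀ x : ℝ} (hx₀ : x₀ ∈ s) (hx : x ∈ s)
    (hxx₀ : (x : ℂ) ∈ ball (x₀ : ℂ) δ⁻¹) : taylorExtension f s x₀ x = f x := by
  have hδx : δ * |x - x₀| < 1 := by
    rw [mem_ball, Complex.dist_ofReal_ofReal] at hxx₀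
    simpa only [mul_inv_cancel₀ hδ.ne'] using mul_lt_mul_of_pos_left hxx₀ hδ
  rw [taylorExtension, FormalMultilinearSeries.sum, ← Complex.ofReal_sub]
  simp_rw [complexTaylorSeries_apply_ofReal]
  exact (hasSum_taylor_of_norm_iteratedDerivWithin_le hs hf hδ.le hbound hx₀ hx hδx).tsum_eq

theorem taylorExtension_eqOn_inter (hs : s.OrdConnected) (hf : ContDiffOn ℝ (⊤ : ℕ∞) f s)
    (hδ : 0 < δ) (hbound : ∀ y ∈ s, ∀ k : ℕ, ‖iteratedDerivWithin k f s y‖ ≤ D * k ! * δ ^ k)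
    {x₀ x₁ : ℝ} (hx₀ : x₀ ∈ s) (hx₁ : x₁ ∈ s) :
    EqOn (taylorExtension f s x₀) (taylorExtension f s x₁)
      (ball (x₀ : ℂ) δ⁻¹ ∩ ball (x₁ : ℂ) δ⁻¹) := by
  wlog hlt : x₀ < x₁ generalizing x₀ x₁
  · rcases (not_lt.1 hlt).eq_or_lt with rfl | hgt
    · exact eqOn_refl _ _
    · exact inter_comm _ _ ▸ (this hx₁ hx₀ hgt).symm
  intro z hz
  set U := ball (x₀ : ℂ) δ⁻¹ ∩ ball (x₁ : ℂ) δ⁻¹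
  have hU : IsOpen U := isOpen_ball.inter isOpen_ball
  set m := (x₀ + x₁) / 2 with hm
  have hmU : (m : ℂ) ∈ U := by
    have := dist_triangle_left (x₀ : ℂ) x₁ z
    rw [Complex.dist_ofReal_ofReal, abs_of_neg (by linarith)] at this
    simp only [U, mem_inter_iff, mem_ball, Complex.dist_ofReal_ofReal] at hz ⊢
    constructor <;> rw [abs_lt] <;> constructor <;> linarith
  refine AnalyticOnNhd.eqOn_of_preconnected_of_eventuallyEq_ofReal
    (fun w hw => analyticOnNhd_taylorExtension hδ (hbound x₀ hx₀) w hw.1)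
    (fun w hw => analyticOnNhd_taylorExtension hδ (hbound x₁ hx₁) w hw.2)
    ((convex_ball _ _).inter (convex_ball _ _)).isPreconnected hmU ?_ hz
  filter_upwards [Ioo_mem_nhds (a := x₀) (b := x₁) (by linarith) (by linarith),
    Complex.continuous_ofReal.continuousAt.preimage_mem_nhds (hU.mem_nhds hmU)] with t ht htU
  have htmem : t ∈ s := hs.out hx₀ hx₁ (Ioo_subset_Icc_self ht)
  rw [taylorExtension_ofReal hs hf hδ hbound hx₀ htmem htU.1,
    taylorExtension_ofReal hs hf hδ hbound hx₁ htmem htU.2]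

theorem exists_differentiableOn_extension (hs : s.OrdConnected) (hf : ContDiffOn ℝ (⊤ : ℕ∞) f s)
    (hδ : 0 < δ) (hbound : ∀ y ∈ s, ∀ k : ℕ, ‖iteratedDerivWithin k f s y‖ ≤ D * k ! * δ ^ k) :
    ∃ F : ℂ → B, DifferentiableOn ℂ F (⋃ x : s, ball (x : ℂ) δ⁻¹) ∧ ∀ x ∈ s, F x = f x := by
  obtain ⟨F, hF, hFeq⟩ := exists_differentiableOn_iUnion_eqOn (fun _ => isOpen_ball)
    (fun x : s => (analyticOnNhd_taylorExtension hδ (hbound x x.2)).differentiableOn)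
    fun x y => taylorExtension_eqOn_inter hs hf hδ hbound x.2 y.2
  refine ⟨F, hF, fun x hx => ?_⟩
  have hxball : (x : ℂ) ∈ ball (x : ℂ) δ⁻¹ := mem_ball_self (inv_pos.2 hδ)
  rw [hFeq ⟨x, hx⟩ hxball, taylorExtension_ofReal hs hf hδ hbound hx hx hxball]

end ComplexTaylor

theorem complex_analytic_extension_general
    {B : Type*} [NormedAddCommGroup B] [NormedSpace ℂ B] [CompleteSpace B]
    (Γ : Set ℝ) (hΓ : Γ.OrdConnected)
    (f : ℝ → B) (hf : ContDiffOn ℝ (⊤ : ℕ∞) f Γ)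
    (D δ : ℝ) (hδ : 0 < δ)
    (hbound : ∀ y ∈ Γ, ∀ k : ℕ,
      ‖iteratedDerivWithin k f Γ y‖ ≤ D * (Nat.factorial k) * δ ^ k) :
    ∀ τ : ℝ, 0 < τ → τ < 1 / δ →
      ∃ F : ℂ → B,
        DifferentiableOn ℂ F {z : ℂ | Metric.infDist z (Complex.ofReal '' Γ) < τ} ∧
        ∀ y ∈ Γ, F (y : ℂ) = f y := by
  intro τ hτ hτδ
  rcases Γ.eq_empty_or_nonempty with rfl | hΓ'
  · exact ⟨0, differentiableOn_const 0, by simp⟩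
  obtain ⟨F, hF, hFf⟩ := exists_differentiableOn_extension hΓ hf hδ hbound
  refine ⟨F, hF.mono fun z hz => ?_, hFf⟩
  obtain ⟨_, ⟨y, hy, rfl⟩, hzy⟩ := (infDist_lt_iff (hΓ'.image _)).1 hz
  exact mem_iUnion.2 ⟨⟨y, hy⟩, hzy.trans (by rwa [← one_div])⟩

/-- Complex-analytic extension from factorial-geometric derivative bounds: if the
`B`-valued function `f` of a real variable is smooth on the interval `Γ ⊆ ℝ` with
`‖f^{(k)}(y)‖ ≤ D k! δ^k`, then for every `0 < τ < 1/δ` there is a holomorphic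
`F : Σ(Γ,τ) → B` on the open complex neighbourhood `Σ(Γ,τ) = {z : dist(z,Γ) < τ}`
with `F = f` on `Γ`. -/
theorem complex_analytic_extension
    {B : Type*} [NormedAddCommGroup B] [NormedSpace ℂ B] [CompleteSpace B]
    (Γ : Set ℝ) (hΓ : Γ.OrdConnected)
    (f : ℝ → B) (hf : ContDiffOn ℝ (⊤ : ℕ∞) f Γ)
    (D δ : ℝ) (hD : 0 ≤ D) (hδ : 0 < δ)
    (hbound : ∀ y ∈ Γ, ∀ k : ℕ,
      ‖iteratedDerivWithin k f Γ y‖ ≤ D * (Nat.factorial k) * δ ^ k) :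
    ∀ τ : ℝ, 0 < τ → τ < 1 / δ →
      ∃ F : ℂ → B,
        DifferentiableOn ℂ F {z : ℂ | Metric.infDist z (Complex.ofReal '' Γ) < τ} ∧
        ∀ y ∈ Γ, F (y : ℂ) = f y :=
  complex_analytic_extension_general Γ hΓ f hf D δ hδ hbound
end

section
/- Let X = C([−1,1],ℝ) with the supremum norm, let r ≥ 1 be an integer, c₀ > 0, and let P be a bounded linear operator on X satisfying the Jackson-type bound ‖P w − w‖_∞ ≤ c₀ · sup_{x∈[−1,1]} |w^{(r)}(x)| for every w ∈ C^r([−1,1]). Let Γ ⊆ ℝ be open and v : Γ × [−1,1] → ℝ be such that for each y ∈ Γ and each k ≥ 0 the function x ↦ ∂_y^k v(x,y) is r times continuously differentiable with ∂_x^r ∂_y^k v = ∂_y^k ∂_x^r v, and suppose there exist μ₀, μ_r > 0 such that for all y ∈ Γ and all k ≥ 1: sup_x |∂_y^k v(x,y)| ≤ (1 + sup_x |v(x,y)|) · k! · μ₀^k and sup_x |∂_y^k ∂_x^r v(x,y)| ≤ (1 + sup_x |∂_x^r v(x,y)|) · k! · μ_r^k. Then, setting K(y) = c₀·(1 + sup_x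 |∂_x^r v(x,y)|) + (1 + sup_x |v(x,y)|) and γ = max(μ₀, μ_r), one has ‖P ∂_y^k v(·,y)‖_∞ ≤ K(y) · k! · γ^k for all y ∈ Γ and all integers k ≥ 0. -/
/-!
By the triangle inequality `‖P w‖ ≤ ‖P w - w‖ + ‖w‖`. The Jackson bound controls the first term by
`c₀ sup_x |∂_x^r ∂_y^k v|`, which after swapping the derivatives is the `k`-th `y`-derivative of
`∂_x^r v`; both terms then obey factorial-geometric bounds, and enlarging `μ₀`, `μ_r` to their
maximum gives a common ratio. For `k = 0` the bounds hold trivially since `S ≤ 1 + S`.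
-/

open Set

theorem iSup_abs_iteratedDeriv_le_of_factorial_bound {ι : Type*} (f : ι → ℝ → ℝ) (y : ℝ)
    {μ γ : ℝ} (hμ : 0 ≤ μ) (hμγ : μ ≤ γ)
    (hbound : ∀ k : ℕ, 1 ≤ k →
      (⨆ i, |iteratedDeriv k (f i) y|) ≤ (1 + ⨆ i, |f i y|) * (Nat.factorial k) * μ ^ k)
    (k : ℕ) :
    (⨆ i, |iteratedDeriv k (f i) y|) ≤ (1 + ⨆ i, |f i y|) * (Nat.factorial k) * γ ^ k := by
  have hS : 0 ≤ ⨆ i, |f i y| := Real.iSup_nonneg fun i => abs_nonneg _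
  rcases Nat.eq_zero_or_pos k with rfl | hk
  · simp
  · calc (⨆ i, |iteratedDeriv k (f i) y|)
          ≤ (1 + ⨆ i, |f i y|) * (Nat.factorial k) * μ ^ k := hbound k hk
      _ ≤ (1 + ⨆ i, |f i y|) * (Nat.factorial k) * γ ^ k := by gcongr

theorem projected_data_bound_from_jackson_general
    (r : ℕ) (c₀ : ℝ) (hc₀ : 0 < c₀)
    (P : C(Icc (-1 : ℝ) 1, ℝ) →L[ℝ] C(Icc (-1 : ℝ) 1, ℝ))
    (hJackson : ∀ (w : C(Icc (-1 : ℝ) 1, ℝ)) (w' : ℝ → ℝ),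
      ContDiffOn ℝ (r : ℕ∞) w' (Icc (-1 : ℝ) 1) →
      (∀ x : Icc (-1 : ℝ) 1, w x = w' x) →
      ‖P w - w‖ ≤ c₀ * ⨆ x : Icc (-1 : ℝ) 1,
        |iteratedDerivWithin r w' (Icc (-1 : ℝ) 1) x|)
    (Γ : Set ℝ)
    (v : ℝ → ℝ → ℝ)
    (hvx : ∀ y ∈ Γ, ∀ k : ℕ,
      ContDiffOn ℝ (r : ℕ∞) (fun x => iteratedDeriv k (fun y' => v y' x) y)
        (Icc (-1 : ℝ) 1))
    (hswap : ∀ y ∈ Γ, ∀ k : ℕ, ∀ x ∈ Icc (-1 : ℝ) 1,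
      iteratedDerivWithin r (fun x' => iteratedDeriv k (fun y' => v y' x') y)
          (Icc (-1 : ℝ) 1) x =
        iteratedDeriv k
          (fun y' => iteratedDerivWithin r (fun x' => v y' x') (Icc (-1 : ℝ) 1) x) y)
    (μ₀ μr : ℝ) (hμ₀ : 0 < μ₀) (hμr : 0 < μr)
    (hbound₀ : ∀ y ∈ Γ, ∀ k : ℕ, 1 ≤ k →
      (⨆ x : Icc (-1 : ℝ) 1, |iteratedDeriv k (fun y' => v y' x) y|) ≤
        (1 + ⨆ x : Icc (-1 : ℝ) 1, |v y x|) * (Nat.factorial k) * μ₀ ^ k)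
    (hboundr : ∀ y ∈ Γ, ∀ k : ℕ, 1 ≤ k →
      (⨆ x : Icc (-1 : ℝ) 1,
        |iteratedDeriv k
          (fun y' => iteratedDerivWithin r (fun x' => v y' x') (Icc (-1 : ℝ) 1) x) y|) ≤
        (1 + ⨆ x : Icc (-1 : ℝ) 1,
            |iteratedDerivWithin r (fun x' => v y x') (Icc (-1 : ℝ) 1) x|) *
          (Nat.factorial k) * μr ^ k) :
    ∀ y ∈ Γ, ∀ k : ℕ, ∀ w : C(Icc (-1 : ℝ) 1, ℝ),
      (∀ x : Icc (-1 : ℝ) 1, w x = iteratedDeriv k (fun y' => v y' x) y) →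
      ‖P w‖ ≤
        (c₀ * (1 + ⨆ x : Icc (-1 : ℝ) 1,
            |iteratedDerivWithin r (fun x' => v y x') (Icc (-1 : ℝ) 1) x|) +
          (1 + ⨆ x : Icc (-1 : ℝ) 1, |v y x|)) *
          (Nat.factorial k) * (max μ₀ μr) ^ k := by
  intro y hy k w hw
  have hw_norm : ‖w‖ = ⨆ x : Icc (-1 : ℝ) 1, |iteratedDeriv k (fun y' => v y' x) y| := by
    simp only [ContinuousMap.norm_eq_iSup_norm, hw, Real.norm_eq_abs]
  have hJ := hJackson w _ (hvx y hy k) hw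
  simp only [fun x : Icc (-1 : ℝ) 1 => hswap y hy k x x.2] at hJ
  have hv_bound := iSup_abs_iteratedDeriv_le_of_factorial_bound
    (fun (x : Icc (-1 : ℝ) 1) y' => v y' x) y hμ₀.le (le_max_left μ₀ μr) (hbound₀ y hy) k
  have hvr_bound := iSup_abs_iteratedDeriv_le_of_factorial_bound
    (fun (x : Icc (-1 : ℝ) 1) y' => iteratedDerivWithin r (fun x' => v y' x') (Icc (-1 : ℝ) 1) x)
    y hμr.le (le_max_right μ₀ μr) (hboundr y hy) k
  calc ‖P w‖ ≤ ‖w‖ + ‖P w - w‖ := norm_le_norm_add_norm_sub' _ _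
    _ ≤ (1 + ⨆ x : Icc (-1 : ℝ) 1, |v y x|) * (Nat.factorial k) * (max μ₀ μr) ^ k +
        c₀ * ((1 + ⨆ x : Icc (-1 : ℝ) 1,
            |iteratedDerivWithin r (fun x' => v y x') (Icc (-1 : ℝ) 1) x|) *
          (Nat.factorial k) * (max μ₀ μr) ^ k) :=
      add_le_add (hw_norm.trans_le hv_bound)
        (hJ.trans (mul_le_mul_of_nonneg_left hvr_bound hc₀.le))
    _ = _ := by ring

/-- Projected-data analyticity bounds from a Jackson-type estimate: if the projector `P`
on `X = C([−1,1],ℝ)` satisfies `‖Pw − w‖_∞ ≤ c₀ sup_x |w^{(r)}(x)|` for `r`-times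
continuously differentiable `w`, and the data `v(y,x)` satisfies factorial-geometric
`y`-derivative bounds (with constants `μ₀` for `v` and `μ_r` for `∂_x^r v`), then
`‖P ∂_y^k v(·,y)‖_∞ ≤ K(y) k! γ^k` with
`K(y) = c₀(1 + sup_x |∂_x^r v|) + (1 + sup_x |v|)` and `γ = max(μ₀, μ_r)`. -/
theorem projected_data_bound_from_jackson
    (r : ℕ) (hr : 1 ≤ r) (c₀ : ℝ) (hc₀ : 0 < c₀)
    (P : C(Icc (-1 : ℝ) 1, ℝ) →L[ℝ] C(Icc (-1 : ℝ) 1, ℝ))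
    (hJackson : ∀ (w : C(Icc (-1 : ℝ) 1, ℝ)) (w' : ℝ → ℝ),
      ContDiffOn ℝ (r : ℕ∞) w' (Icc (-1 : ℝ) 1) →
      (∀ x : Icc (-1 : ℝ) 1, w x = w' x) →
      ‖P w - w‖ ≤ c₀ * ⨆ x : Icc (-1 : ℝ) 1,
        |iteratedDerivWithin r w' (Icc (-1 : ℝ) 1) x|)
    (Γ : Set ℝ) (hΓ : IsOpen Γ)
    (v : ℝ → ℝ → ℝ)
    (hvy : ∀ x ∈ Icc (-1 : ℝ) 1, ContDiffOn ℝ (⊤ : ℕ∞) (fun y => v y x) Γ)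
    (hvx : ∀ y ∈ Γ, ∀ k : ℕ,
      ContDiffOn ℝ (r : ℕ∞) (fun x => iteratedDeriv k (fun y' => v y' x) y)
        (Icc (-1 : ℝ) 1))
    (hswap : ∀ y ∈ Γ, ∀ k : ℕ, ∀ x ∈ Icc (-1 : ℝ) 1,
      iteratedDerivWithin r (fun x' => iteratedDeriv k (fun y' => v y' x') y)
          (Icc (-1 : ℝ) 1) x =
        iteratedDeriv k
          (fun y' => iteratedDerivWithin r (fun x' => v y' x') (Icc (-1 : ℝ) 1) x) y)
    (μ₀ μr : ℝ) (hμ₀ : 0 < μ₀) (hμr : 0 < μr)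
    (hbound₀ : ∀ y ∈ Γ, ∀ k : ℕ, 1 ≤ k →
      (⨆ x : Icc (-1 : ℝ) 1, |iteratedDeriv k (fun y' => v y' x) y|) ≤
        (1 + ⨆ x : Icc (-1 : ℝ) 1, |v y x|) * (Nat.factorial k) * μ₀ ^ k)
    (hboundr : ∀ y ∈ Γ, ∀ k : ℕ, 1 ≤ k →
      (⨆ x : Icc (-1 : ℝ) 1,
        |iteratedDeriv k
          (fun y' => iteratedDerivWithin r (fun x' => v y' x') (Icc (-1 : ℝ) 1) x) y|) ≤
        (1 + ⨆ x : Icc (-1 : ℝ) 1,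
            |iteratedDerivWithin r (fun x' => v y x') (Icc (-1 : ℝ) 1) x|) *
          (Nat.factorial k) * μr ^ k) :
    ∀ y ∈ Γ, ∀ k : ℕ, ∀ w : C(Icc (-1 : ℝ) 1, ℝ),
      (∀ x : Icc (-1 : ℝ) 1, w x = iteratedDeriv k (fun y' => v y' x) y) →
      ‖P w‖ ≤
        (c₀ * (1 + ⨆ x : Icc (-1 : ℝ) 1,
            |iteratedDerivWithin r (fun x' => v y x') (Icc (-1 : ℝ) 1) x|) +
          (1 + ⨆ x : Icc (-1 : ℝ) 1, |v y x|)) *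
          (Nat.factorial k) * (max μ₀ μr) ^ k :=
  projected_data_bound_from_jackson_general r c₀ hc₀ P hJackson Γ v hvx hswap μ₀ μr hμ₀ hμr hbound₀
    hboundr
end
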